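/- arXiv:2202.13507 — 6 statements merged into one kernel-verified Lean document; each statement's English description precedes it below -/
import Mathlib

section
/- For all u, v ∈ ℂ^N and r, s ∈ ℤ^N, the commutator of derivations satisfies [D(u,r), D(v,s)] = D(w, r+s), where w = ⟨u,s⟩·v − ⟨v,r⟩·u. -/
/-- The Laurent polynomial algebra `A = ℂ[t₁^{±1}, …, t_N^{±1}]`, realized as the
group algebra of `ℤ^N` over `ℂ`; the monomial `t^r` is `AddMonoidAlgebra.single r 1`. -/
noncomputable abbrev LaurentA (N : ℕ) := AddMonoidAlgebra ℂ (Fin N → ℤ)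

/-- `IsD N u r D` says that `D` is the derivation `D(u,r)` of `A`, i.e. the (unique)
`ℂ`-linear derivation with `D(t^s) = ⟨u,s⟩ · t^{r+s}` for all `s ∈ ℤ^N`. -/
def IsD (N : ℕ) (u : Fin N → ℂ) (r : Fin N → ℤ)
    (D : Derivation ℂ (LaurentA N) (LaurentA N)) : Prop :=
  ∀ s : Fin N → ℤ,
    D (AddMonoidAlgebra.single s (1 : ℂ)) =
      (∑ i, u i * (s i : ℂ)) • AddMonoidAlgebra.single (r + s) (1 : ℂ)

theorem AddMonoidAlgebra.derivation_ext {k G M : Type*} [CommSemiring k] [AddCommMonoid G]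
    [AddCommMonoid M] [Module (AddMonoidAlgebra k G) M] [Module k M]
    {D₁ D₂ : Derivation k (AddMonoidAlgebra k G) M}
    (h : ∀ g, D₁ (single g 1) = D₂ (single g 1)) : D₁ = D₂ := by
  have h_lin : (D₁ : AddMonoidAlgebra k G →ₗ[k] M) = D₂ :=
    AddMonoidAlgebra.lhom_ext' fun g => LinearMap.ext_ring (h g)
  exact Derivation.ext fun a => LinearMap.congr_fun h_lin a

namespace IsD

variable {N : ℕ} {u v : Fin N → ℂ} {r s : Fin N → ℤ}

theorem eq {D D' : Derivation ℂ (LaurentA N) (LaurentA N)} (h : IsD N u r D)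
    (h' : IsD N u r D') : D = D' :=
  AddMonoidAlgebra.derivation_ext fun m => (h m).trans (h' m).symm

theorem lie {D₁ D₂ : Derivation ℂ (LaurentA N) (LaurentA N)} (h₁ : IsD N u r D₁)
    (h₂ : IsD N v s D₂) :
    IsD N ((∑ i, u i * (s i : ℂ)) • v - (∑ i, v i * (r i : ℂ)) • u) (r + s) ⁅D₁, D₂⁆ := by
  intro m
  rw [Derivation.commutator_apply, h₂ m, h₁ m, Derivation.map_smul, Derivation.map_smul,
    h₁ (s + m), h₂ (r + m), smul_smul, smul_smul, ← add_assoc, ← add_assoc, add_comm s r,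
    ← sub_smul]
  congr 1
  simp only [Pi.add_apply, Int.cast_add, mul_add, Finset.sum_add_distrib, Pi.sub_apply,
    Pi.smul_apply, smul_eq_mul, sub_mul, Finset.sum_sub_distrib, mul_assoc, ← Finset.mul_sum]
  ring

end IsD

theorem stmt2_general (N : ℕ) (u v : Fin N → ℂ) (r s : Fin N → ℤ)
    (D₁ D₂ D₃ : Derivation ℂ (LaurentA N) (LaurentA N))
    (h₁ : IsD N u r D₁) (h₂ : IsD N v s D₂)
    (h₃ : IsD N ((∑ i, u i * (s i : ℂ)) • v - (∑ i, v i * (r i : ℂ)) • u) (r + s) D₃) :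
    ⁅D₁, D₂⁆ = D₃ :=
  (h₁.lie h₂).eq h₃

/-- For all `u, v ∈ ℂ^N` and `r, s ∈ ℤ^N`:
`[D(u,r), D(v,s)] = D(w, r+s)` where `w = ⟨u,s⟩·v − ⟨v,r⟩·u`. -/
theorem stmt2 (N : ℕ) (hN : 1 ≤ N) (u v : Fin N → ℂ) (r s : Fin N → ℤ)
    (D₁ D₂ D₃ : Derivation ℂ (LaurentA N) (LaurentA N))
    (h₁ : IsD N u r D₁) (h₂ : IsD N v s D₂)
    (h₃ : IsD N ((∑ i, u i * (s i : ℂ)) • v - (∑ i, v i * (r i : ℂ)) • u) (r + s) D₃) :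
    ⁅D₁, D₂⁆ = D₃ :=
  stmt2_general N u v r s D₁ D₂ D₃ h₁ h₂ h₃
end

section
/- Let r ∈ ℤ^{2m+1} be nonzero. If r ∈ G then {u ∈ ℂ^M : ⟨u, r̲⟩ = 0} = ℂ^M. If r ∉ G then the subspace H_r = {u ∈ ℂ^M : ⟨u, r̲⟩ = 0} contains r, the quotient ℂ^M/H_r is one-dimensional, and moreover ⟨r̲, r̲⟩ is a positive integer. -/
/-!
Pair the coordinate `i` of `ℤ^{2m+1}` with `m + i`. In `⟨r, r̲⟩` the products `r_i r_{m+i}`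
cancel pairwise and the terms involving `r_M` cancel against `r_M · r̲_M`, so `⟨r, r̲⟩ = 0`;
and `r̲ = 0` says exactly that `r ∈ G`. Hence for `r ∈ G` the form `⟨·, r̲⟩` vanishes, while for
`r ∉ G` it is a nonzero functional on `ℂ^M`, whose kernel has codimension one, and `⟨r̲, r̲⟩` is a
nonzero sum of squares.
-/

/-- The "underline" map on `ℤ^{2m+1}`:
`ul r = (r_{m+1}+r_M, …, r_{2m}+r_M, −r_1+r_M, …, −r_m+r_M, −Σ_{i=1}^{2m} r_i)`. -/
def ul (m : ℕ) (r : Fin (2*m+1) → ℤ) : Fin (2*m+1) → ℤ := fun i =>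
  if h : (i : ℕ) < m then r ⟨(i : ℕ) + m, by omega⟩ + r ⟨2*m, by omega⟩
  else if h2 : (i : ℕ) < 2*m then - r ⟨(i : ℕ) - m, by omega⟩ + r ⟨2*m, by omega⟩
  else - ∑ j : Fin (2*m), r ⟨(j : ℕ), by have := j.isLt; omega⟩

/-- `r ∈ G` iff `r_i = r_M` for `1 ≤ i ≤ m` and `r_i = −r_M` for `m+1 ≤ i ≤ 2m`. -/
def memG (m : ℕ) (r : Fin (2*m+1) → ℤ) : Prop :=
  ∀ i : Fin (2*m+1),
    ((i : ℕ) < m → r i = r ⟨2*m, by omega⟩) ∧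
    (m ≤ (i : ℕ) → (i : ℕ) < 2*m → r i = - r ⟨2*m, by omega⟩)

/-- subspace `{u ∈ ℂ^M : ⟨u, c⟩ = 0}` for a fixed vector `c ∈ ℂ^M`. -/
noncomputable def perp (M : ℕ) (c : Fin M → ℂ) : Submodule ℂ (Fin M → ℂ) where
  carrier := {u | ∑ i, u i * c i = 0}
  add_mem' := fun {a b} ha hb => by
    simp only [Set.mem_setOf_eq, Pi.add_apply, add_mul, Finset.sum_add_distrib] at *
    rw [ha, hb, add_zero]
  zero_mem' := by simp
  smul_mem' := fun t a ha => by
    simp only [Set.mem_setOf_eq, Pi.smul_apply, smul_eq_mul, mul_assoc,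
      ← Finset.mul_sum] at *
    rw [ha, mul_zero]

open Matrix

section Halves
variable {m : ℕ}

-- Indices are 0-based: `firstHalf j`, `secondHalf j` and `Fin.last (2 * m)` are the paper's
-- coordinates `j + 1`, `m + j + 1` and `M`.
def firstHalf (j : Fin m) : Fin (2 * m + 1) := ⟨j, by omega⟩

def secondHalf (j : Fin m) : Fin (2 * m + 1) := ⟨j + m, by omega⟩

theorem Fin.sum_two_mul {M : Type*} [AddCommMonoid M] (f : Fin (2 * m) → M) :
    ∑ i, f i = ∑ j : Fin m, (f ⟨j, by omega⟩ + f ⟨j + m, by omega⟩) := by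
  rw [← Fin.sum_congr' f (two_mul m).symm, Fin.sum_univ_add, ← Finset.sum_add_distrib]
  simp only [Fin.cast, Fin.val_castAdd, Fin.val_natAdd, add_comm m]

theorem Fin.sum_two_mul_add_one {M : Type*} [AddCommMonoid M] (f : Fin (2 * m + 1) → M) :
    ∑ i, f i = ∑ j : Fin m, (f (firstHalf j) + f (secondHalf j)) + f (Fin.last _) := by
  rw [Fin.sum_univ_castSucc, Fin.sum_two_mul]
  rfl

theorem Fin.eq_firstHalf_or_eq_secondHalf_or_eq_last (i : Fin (2 * m + 1)) :
    (∃ j, i = firstHalf j) ∨ (∃ j, i = secondHalf j) ∨ i = Fin.last _ := by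
  obtain ⟨i, hi⟩ := i
  by_cases h₁ : i < m
  · exact .inl ⟨⟨i, h₁⟩, rfl⟩
  by_cases h₂ : i < 2 * m
  · exact .inr <| .inl ⟨⟨i - m, by omega⟩, Fin.ext <| by simp only [secondHalf]; omega⟩
  · exact .inr <| .inr <| Fin.ext <| by simp only [Fin.val_last]; omega

end Halves

section Underline
variable (m : ℕ) (r : Fin (2 * m + 1) → ℤ)

theorem ul_firstHalf (j : Fin m) : ul m r (firstHalf j) = r (secondHalf j) + r (Fin.last _) := by
  simp [ul, firstHalf, secondHalf, Fin.last]

theorem ul_secondHalf (j : Fin m) : ul m r (secondHalf j) = -r (firstHalf j) + r (Fin.last _) := by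
  have : (j : ℕ) + m < 2 * m := by omega
  simp [ul, firstHalf, secondHalf, Fin.last, this]

theorem ul_last : ul m r (Fin.last _) = -∑ j : Fin m, (r (firstHalf j) + r (secondHalf j)) := by
  simp only [ul, Fin.val_last, lt_irrefl, dite_false, show ¬ 2 * m < m by omega]
  exact congrArg Neg.neg (Fin.sum_two_mul _)

theorem memG_iff : memG m r ↔
    ∀ j : Fin m, r (firstHalf j) = r (Fin.last _) ∧ r (secondHalf j) = -r (Fin.last _) := by
  refine ⟨fun h j => ⟨(h _).1 j.isLt, (h _).2 (by simp [secondHalf])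
    (by simp only [secondHalf]; omega)⟩, fun h i => ?_⟩
  rcases i.eq_firstHalf_or_eq_secondHalf_or_eq_last with ⟨j, rfl⟩ | ⟨j, rfl⟩ | rfl
  · exact ⟨fun _ => (h j).1, fun hm _ => absurd j.isLt (by simp only [firstHalf] at hm; omega)⟩
  · exact ⟨fun hm => absurd hm (by simp [secondHalf]), fun _ _ => (h j).2⟩
  · exact ⟨fun hm => absurd hm (by simp only [Fin.val_last]; omega),
      fun _ hm => absurd hm (by simp)⟩

theorem ul_eq_zero_iff : ul m r = 0 ↔ memG m r := by
  rw [memG_iff]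
  refine ⟨fun h j => ?_, fun h => funext fun i => ?_⟩
  · have h₁ := congrFun h (firstHalf j)
    have h₂ := congrFun h (secondHalf j)
    rw [Pi.zero_apply, ul_firstHalf] at h₁
    rw [Pi.zero_apply, ul_secondHalf] at h₂
    constructor <;> linarith
  · rcases i.eq_firstHalf_or_eq_secondHalf_or_eq_last with ⟨j, rfl⟩ | ⟨j, rfl⟩ | rfl <;>
      simp [ul_firstHalf, ul_secondHalf, ul_last, h]

theorem dotProduct_ul_eq_zero : r ⬝ᵥ ul m r = 0 := by
  rw [dotProduct, Fin.sum_two_mul_add_one]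
  simp only [ul_firstHalf, ul_secondHalf, ul_last, mul_neg, Finset.mul_sum,
    ← Finset.sum_neg_distrib, ← Finset.sum_add_distrib]
  exact Finset.sum_eq_zero fun j _ => by ring

end Underline

theorem Module.Dual.finrank_quotient_ker_of_ne_zero {K V : Type*} [Field K] [AddCommGroup V]
    [Module K V] {f : Module.Dual K V} (hf : f ≠ 0) :
    Module.finrank K (V ⧸ LinearMap.ker f) = 1 := by
  rw [f.quotKerEquivRange.finrank_eq, range_eq_top_of_ne_zero hf, finrank_top,
    Module.finrank_self]

section Perp
variable {M : ℕ}

theorem mem_perp {c u : Fin M → ℂ} : u ∈ perp M c ↔ u ⬝ᵥ c = 0 := Iff.rfl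

theorem perp_zero : perp M 0 = ⊤ :=
  eq_top_iff.mpr fun u _ => by simp [mem_perp]

theorem perp_eq_ker_dotProductEquiv (c : Fin M → ℂ) :
    perp M c = LinearMap.ker (dotProductEquiv ℂ (Fin M) c) := by
  ext u
  simp [mem_perp, dotProduct_comm]

theorem finrank_quotient_perp {c : Fin M → ℂ} (hc : c ≠ 0) :
    Module.finrank ℂ ((Fin M → ℂ) ⧸ perp M c) = 1 := by
  rw [perp_eq_ker_dotProductEquiv]
  exact Module.Dual.finrank_quotient_ker_of_ne_zero
    ((dotProductEquiv ℂ (Fin M)).map_ne_zero_iff.mpr hc)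

end Perp

theorem stmt10_general (m : ℕ) (r : Fin (2*m+1) → ℤ) :
    (memG m r → perp (2*m+1) (fun i => (ul m r i : ℂ)) = ⊤) ∧
    (¬ memG m r →
      (fun i => (r i : ℂ)) ∈ perp (2*m+1) (fun i => (ul m r i : ℂ)) ∧
      Module.finrank ℂ
        ((Fin (2*m+1) → ℂ) ⧸ perp (2*m+1) (fun i => (ul m r i : ℂ))) = 1 ∧
      0 < ∑ i, ul m r i * ul m r i) := by
  refine ⟨fun hG => ?_, fun hG => ?_⟩
  · simp only [(ul_eq_zero_iff m r).mpr hG, Pi.zero_apply, Int.cast_zero]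
    exact perp_zero
  have hul : ul m r ≠ 0 := mt (ul_eq_zero_iff m r).mp hG
  refine ⟨?_, finrank_quotient_perp ?_, ?_⟩
  · have h := congrArg (Int.castRingHom ℂ) (dotProduct_ul_eq_zero m r)
    rwa [RingHom.map_dotProduct, map_zero] at h
  · exact fun h => hul (funext fun i => by simpa using congrFun h i)
  · exact (Fintype.sum_nonneg fun i => mul_self_nonneg _).lt_of_ne
      (Ne.symm (dotProduct_self_eq_zero.not.mpr hul))

/-- For nonzero `r ∈ ℤ^{2m+1}`: if `r ∈ G` then `{u : ⟨u, r̲⟩ = 0} = ℂ^M`; if `r ∉ G`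
then `H_r = {u : ⟨u, r̲⟩ = 0}` contains `r`, the quotient `ℂ^M/H_r` is one-dimensional,
and `⟨r̲, r̲⟩` is a positive integer. -/
theorem stmt10 (m : ℕ) (hm : 1 ≤ m) (r : Fin (2*m+1) → ℤ) (hr : r ≠ 0) :
    (memG m r → perp (2*m+1) (fun i => (ul m r i : ℂ)) = ⊤) ∧
    (¬ memG m r →
      (fun i => (r i : ℂ)) ∈ perp (2*m+1) (fun i => (ul m r i : ℂ)) ∧
      Module.finrank ℂ
        ((Fin (2*m+1) → ℂ) ⧸ perp (2*m+1) (fun i => (ul m r i : ℂ))) = 1 ∧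
      0 < ∑ i, ul m r i * ul m r i) :=
  stmt10_general m r
end

section
/- Suppose l, s ∈ ℤ^N satisfy ⟨l, s̄⟩ ≠ 0. Then: (1) λ(s+l, s) = λ(s, s); (2) λ(s, l) = λ(s, s) = λ(l, l); (3) λ(s, s) = λ(s+l, s+l) = λ(l, l); (4) λ(s+l, j·l) = λ(s, s) = λ(l, l) for every j ∈ ℤ \ {0}; (5) λ(s, j·s + l) = λ(s, s) = λ(l, l) for every j ∈ ℤ \ {0}. -/
/-- The "bar" involution on `ℤ^{2m}`:
`bar r = (r_{m+1}, …, r_{2m}, -r_1, …, -r_m)`. -/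
def bar (m : ℕ) (r : Fin (2*m) → ℤ) : Fin (2*m) → ℤ := fun i =>
  if h : (i : ℕ) < m then r ⟨(i : ℕ) + m, by omega⟩
  else - r ⟨(i : ℕ) - m, by have := i.isLt; omega⟩

/-- Equation (9.3): for all nonzero `l, r, s ∈ ℤ^{2m}`,
`⟨l̄,s⟩·λ(r,s+l) + ⟨l̄,r⟩·λ(s,r+l) − ⟨l̄,r+s⟩·λ(r,s) = 0`. -/
def Eq93 (m : ℕ) (lam : (Fin (2*m) → ℤ) → (Fin (2*m) → ℤ) → ℂ) : Prop :=
  ∀ l r s : Fin (2*m) → ℤ, l ≠ 0 → r ≠ 0 → s ≠ 0 →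
    ((∑ i, bar m l i * s i : ℤ) : ℂ) * lam r (s + l)
      + ((∑ i, bar m l i * r i : ℤ) : ℂ) * lam s (r + l)
      - ((∑ i, bar m l i * (r + s) i : ℤ) : ℂ) * lam r s = 0

namespace Aux
variable (m : ℕ)

def B (l s : Fin (2*m) → ℤ) : ℤ := ∑ i, bar m l i * s i

def flip : Fin (2*m) → Fin (2*m) := fun i =>
  if h : (i : ℕ) < m then ⟨(i:ℕ) + m, by omega⟩
  else ⟨(i:ℕ) - m, by have := i.isLt; omega⟩

lemma flip_inv : Function.Involutive (flip m) := by
  intro i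
  unfold flip
  by_cases h : (i:ℕ) < m
  · rw [dif_pos h]
    have h2 : ¬ ((i:ℕ) + m < m) := by omega
    rw [dif_neg h2]
    ext; simp
  · rw [dif_neg h]
    have h2 : (i:ℕ) - m < m := by have := i.isLt; omega
    rw [dif_pos h2]
    ext; simp; omega

def sigma : Equiv.Perm (Fin (2*m)) := (flip_inv m).toPerm

lemma B_skew (l s : Fin (2*m) → ℤ) : B m s l = - B m l s := by
  unfold B
  rw [← Equiv.sum_comp (sigma m) (fun i => bar m s i * l i), ← Finset.sum_neg_distrib]
  apply Finset.sum_congr rfl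
  intro i _
  show bar m s (flip m i) * l (flip m i) = -(bar m l i * s i)
  unfold bar flip
  by_cases h : (i:ℕ) < m
  · rw [dif_pos h, dif_pos h]
    have h2 : ¬ ((i:ℕ) + m < m) := by omega
    rw [dif_neg h2]
    simp; ring
  · rw [dif_neg h, dif_neg h]
    have h2 : (i:ℕ) - m < m := by have := i.isLt; omega
    rw [dif_pos h2]
    have h3 : (i:ℕ) - m + m = (i:ℕ) := by have := i.isLt; omega
    simp [h3]; ring

lemma B_self (l : Fin (2*m) → ℤ) : B m l l = 0 := by
  have := B_skew m l l; omega

lemma B_add_right (l s t : Fin (2*m) → ℤ) : B m l (s + t) = B m l s + B m l t := by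
  unfold B
  rw [← Finset.sum_add_distrib]
  exact Finset.sum_congr rfl fun i _ => by simp [mul_add]

lemma bar_add (r t : Fin (2*m) → ℤ) : bar m (r + t) = bar m r + bar m t := by
  funext i
  unfold bar
  by_cases h : (i:ℕ) < m <;> simp [h] <;> ring

lemma bar_smul (c : ℤ) (r : Fin (2*m) → ℤ) : bar m (c • r) = c • bar m r := by
  funext i
  unfold bar
  by_cases h : (i:ℕ) < m <;> simp [h] <;> ring

lemma B_add_left (l t s : Fin (2*m) → ℤ) : B m (l + t) s = B m l s + B m t s := by
  unfold B
  rw [← Finset.sum_add_distrib]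
  exact Finset.sum_congr rfl fun i _ => by rw [bar_add]; simp [add_mul]

lemma B_smul_left (c : ℤ) (l s : Fin (2*m) → ℤ) : B m (c • l) s = c * B m l s := by
  unfold B
  rw [Finset.mul_sum]
  exact Finset.sum_congr rfl fun i _ => by rw [bar_smul]; simp; ring

lemma ne_zero_of_B (l s : Fin (2*m) → ℤ) (h : B m l s ≠ 0) : l ≠ 0 ∧ s ≠ 0 := by
  constructor
  · rintro rfl
    apply h
    unfold B bar
    apply Finset.sum_eq_zero
    intro i _
    by_cases hi : (i:ℕ) < m <;> simp [hi]
  · rintro rfl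
    apply h
    unfold B
    simp

variable {m}
variable (lam : (Fin (2*m) → ℤ) → (Fin (2*m) → ℤ) → ℂ)
  (hsymm : ∀ r s, lam r s = lam s r) (h93 : Eq93 m lam)

include h93 in
lemma key1 (l s : Fin (2*m) → ℤ) (h : B m l s ≠ 0) : lam s (s + l) = lam s s := by
  obtain ⟨hl, hs⟩ := ne_zero_of_B m l s h
  have h0 := h93 l s s hl hs hs
  have e1 : (∑ i, bar m l i * s i) = B m l s := rfl
  have e2 : (∑ i, bar m l i * (s + s) i) = B m l (s + s) := rfl
  rw [e1, e2, B_add_right] at h0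
  have h1 : (2 * (B m l s : ℂ)) * (lam s (s + l) - lam s s) = 0 := by
    push_cast at h0 ⊢; linear_combination h0
  have hB : (2 * (B m l s : ℂ)) ≠ 0 := by
    simp only [mul_ne_zero_iff]
    exact ⟨two_ne_zero, by exact_mod_cast h⟩
  have := (mul_eq_zero.mp h1).resolve_left hB
  exact sub_eq_zero.mp this

include hsymm h93 in
lemma key2 (l s : Fin (2*m) → ℤ) (h : B m l s ≠ 0) : lam s l = lam s s := by
  obtain ⟨hl, hs⟩ := ne_zero_of_B m l s h
  have h0 := h93 s l s hs hl hs
  have e1 : (∑ i, bar m s i * s i) = B m s s := rfl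
  have e2 : (∑ i, bar m s i * l i) = B m s l := rfl
  have e3 : (∑ i, bar m s i * (l + s) i) = B m s (l + s) := rfl
  rw [e1, e2, e3, B_add_right, B_self] at h0
  have h1 : ((B m s l : ℂ)) * (lam s (l + s) - lam l s) = 0 := by
    push_cast at h0 ⊢; linear_combination h0
  have hB : ((B m s l : ℂ)) ≠ 0 := by
    rw [B_skew]; push_cast
    simpa using (by exact_mod_cast h : ((B m l s : ℂ)) ≠ 0)
  have h2 := sub_eq_zero.mp ((mul_eq_zero.mp h1).resolve_left hB)
  rw [add_comm l s, key1 lam h93 l s h] at h2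
  rw [hsymm]
  exact h2.symm

include hsymm h93 in
lemma key2b (l s : Fin (2*m) → ℤ) (h : B m l s ≠ 0) : lam s s = lam l l := by
  have hB : B m s l ≠ 0 := by rw [B_skew]; simpa using h
  have h1 := key2 lam hsymm h93 s l hB   -- lam l s = lam l l
  have h2 := key2 lam hsymm h93 l s h    -- lam s l = lam s s
  rw [hsymm] at h2
  rw [← h2, h1]

end Aux

/-- Lemma 9.6: if `⟨l, s̄⟩ ≠ 0` then
(1) `λ(s+l,s) = λ(s,s)`; (2) `λ(s,l) = λ(s,s) = λ(l,l)`;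
(3) `λ(s,s) = λ(s+l,s+l) = λ(l,l)`;
(4) `λ(s+l, j·l) = λ(s,s) = λ(l,l)` for all `j ∈ ℤ \ {0}`;
(5) `λ(s, j·s+l) = λ(s,s) = λ(l,l)` for all `j ∈ ℤ \ {0}`. -/
theorem stmt11 (m : ℕ) (hm : 1 ≤ m)
    (lam : (Fin (2*m) → ℤ) → (Fin (2*m) → ℤ) → ℂ)
    (hsymm : ∀ r s, lam r s = lam s r)
    (h93 : Eq93 m lam)
    (l s : Fin (2*m) → ℤ) (hls : (∑ i, l i * bar m s i) ≠ 0) :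
    lam (s + l) s = lam s s ∧
    (lam s l = lam s s ∧ lam s s = lam l l) ∧
    (lam s s = lam (s + l) (s + l) ∧ lam (s + l) (s + l) = lam l l) ∧
    (∀ j : ℤ, j ≠ 0 → lam (s + l) (j • l) = lam s s ∧ lam s s = lam l l) ∧
    (∀ j : ℤ, j ≠ 0 → lam s (j • s + l) = lam s s ∧ lam s s = lam l l) := by
  open Aux in
  have hB : B m l s ≠ 0 := by
    intro h0
    apply hls
    have : (∑ i, l i * bar m s i) = B m s l := by
      unfold Aux.B
      exact Finset.sum_congr rfl fun i _ => mul_comm _ _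
    rw [this, B_skew, h0, neg_zero]
  have key1' := Aux.key1 lam h93 l s hB       -- lam s (s+l) = lam s s
  have key2a := Aux.key2 lam hsymm h93 l s hB -- lam s l = lam s s
  have key2c := Aux.key2b lam hsymm h93 l s hB -- lam s s = lam l l
  have hBsl : Aux.B m l (s + l) ≠ 0 := by
    rw [Aux.B_add_right, Aux.B_self, add_zero]; exact hB
  have h3 : lam (s + l) (s + l) = lam l l := (Aux.key2b lam hsymm h93 l (s+l) hBsl).symm.symm
  refine ⟨by rw [hsymm]; exact key1', ⟨key2a, key2c⟩, ⟨?_, h3⟩, ?_, ?_⟩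
  · rw [h3, key2c]
  · intro j hj
    have hBj : Aux.B m (j • l) (s + l) ≠ 0 := by
      rw [Aux.B_smul_left]
      exact mul_ne_zero hj hBsl
    have h4 := Aux.key2 lam hsymm h93 (j • l) (s + l) hBj
    exact ⟨by rw [h4, h3]; exact key2c.symm, key2c⟩
  · intro j hj
    have hBj : Aux.B m (j • s + l) s ≠ 0 := by
      rw [Aux.B_add_left, Aux.B_smul_left, Aux.B_self, mul_zero, zero_add]; exact hB
    exact ⟨Aux.key2 lam hsymm h93 (j • s + l) s hBj, key2c⟩
end

section
/- Let r, s ∈ ℤ^N \ {0} be such that r is not a rational multiple of s and s is not a rational multiple of r. Then: (1) λ(r, r) = λ(s, s); (2) λ(s+r, s) = λ(s, s); (3) λ(r, s) = λ(s, s); (4) λ(s+r, j·r) = λ(s, s) for every j ∈ ℤ \ {0}; (5) λ(s, j·s + r) = λ(s, s) for every j ∈ ℤ \ {0}. -/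
namespace Stmt13Aux

variable {m : ℕ}

lemma bar_lt (a : Fin (2*m) → ℤ) {i : Fin (2*m)} (h : (i:ℕ) < m) :
    bar m a i = a ⟨(i:ℕ) + m, by omega⟩ := dif_pos h

lemma bar_ge (a : Fin (2*m) → ℤ) {i : Fin (2*m)} (h : m ≤ (i:ℕ)) :
    bar m a i = - a ⟨(i:ℕ) - m, by have := i.isLt; omega⟩ := dif_neg (by omega)

lemma bar_add (a b : Fin (2*m) → ℤ) : bar m (a + b) = bar m a + bar m b := by
  funext i
  simp only [bar, Pi.add_apply]
  split <;> ring

lemma bar_smul (j : ℤ) (a : Fin (2*m) → ℤ) : bar m (j • a) = j • bar m a := by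
  funext i
  simp only [bar, Pi.smul_apply, smul_eq_mul]
  split <;> ring

lemma bar_neg (a : Fin (2*m) → ℤ) : bar m (-a) = - bar m a := by
  funext i
  simp only [bar, Pi.neg_apply]
  split <;> ring

lemma bar_bar (a : Fin (2*m) → ℤ) : bar m (bar m a) = -a := by
  funext i
  rcases lt_or_ge (i:ℕ) m with h | h
  · rw [bar_lt _ h, bar_ge _ (show m ≤ (i:ℕ) + m from Nat.le_add_left m _)]
    rw [Pi.neg_apply]
    simp only [Nat.add_sub_cancel, Fin.eta]
  · have hi := i.isLt
    rw [bar_ge _ h, bar_lt _ (show (i:ℕ) - m < m by omega)]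
    rw [Pi.neg_apply]
    simp only [Nat.sub_add_cancel h, Fin.eta]


/-- The swap `i ↦ i ± m` as a function. -/
def sig (m : ℕ) : Fin (2*m) → Fin (2*m) := fun i =>
  if h : (i : ℕ) < m then ⟨(i:ℕ) + m, by omega⟩
  else ⟨(i:ℕ) - m, by have := i.isLt; omega⟩

lemma sig_invol : Function.Involutive (sig m) := by
  intro i
  rcases lt_or_ge (i:ℕ) m with h | h
  · rw [show sig m i = ⟨(i:ℕ)+m, by omega⟩ from dif_pos h]
    rw [show sig m ⟨(i:ℕ)+m, by omega⟩ = ⟨(i:ℕ)+m-m, by have := i.isLt; omega⟩ from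
      dif_neg (by simp)]
    exact Fin.ext (by simp)
  · have hi := i.isLt
    rw [show sig m i = ⟨(i:ℕ)-m, by omega⟩ from dif_neg (by omega)]
    rw [show sig m ⟨(i:ℕ)-m, by omega⟩ = ⟨(i:ℕ)-m+m, by omega⟩ from dif_pos (show (i:ℕ)-m < m by omega)]
    exact Fin.ext (by simp [Nat.sub_add_cancel h])

/-- The symplectic form. -/
def Bf (m : ℕ) (a b : Fin (2*m) → ℤ) : ℤ := ∑ i, bar m a i * b i

lemma Bf_antisymm (a b : Fin (2*m) → ℤ) : Bf m a b = - Bf m b a := by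
  have key : ∀ i, bar m a (sig m i) * b (sig m i) = -(bar m b i * a i) := by
    intro i
    rcases lt_or_ge (i:ℕ) m with h | h
    · rw [show sig m i = ⟨(i:ℕ)+m, by omega⟩ from dif_pos h]
      rw [bar_ge a (show m ≤ (i:ℕ)+m from Nat.le_add_left m _)]
      rw [bar_lt b h]
      simp only [Nat.add_sub_cancel, Fin.eta]
      ring
    · have hi := i.isLt
      rw [show sig m i = ⟨(i:ℕ)-m, by omega⟩ from dif_neg (by omega)]
      rw [bar_lt a (show (i:ℕ)-m < m by omega)]
      rw [bar_ge b h]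
      simp only [Nat.sub_add_cancel h, Fin.eta]
      ring
  have := Fintype.sum_equiv (sig_invol.toPerm) (fun i => bar m a (sig m i) * b (sig m i))
    (fun i => bar m a i * b i) (fun i => rfl)
  calc Bf m a b = ∑ i, bar m a (sig m i) * b (sig m i) := this.symm
    _ = ∑ i, -(bar m b i * a i) := by simp only [key]
    _ = - Bf m b a := by rw [Bf]; rw [← Finset.sum_neg_distrib]

lemma Bf_self (a : Fin (2*m) → ℤ) : Bf m a a = 0 := by
  have := Bf_antisymm a a; omega

lemma Bf_add_right (t a b : Fin (2*m) → ℤ) : Bf m t (a + b) = Bf m t a + Bf m t b := by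
  simp [Bf, Pi.add_apply, mul_add, Finset.sum_add_distrib]

lemma Bf_add_left (a b t : Fin (2*m) → ℤ) : Bf m (a + b) t = Bf m a t + Bf m b t := by
  simp [Bf, bar_add, Pi.add_apply, add_mul, Finset.sum_add_distrib]

lemma Bf_smul_left (j : ℤ) (a t : Fin (2*m) → ℤ) : Bf m (j • a) t = j * Bf m a t := by
  rw [Bf, Bf, Finset.mul_sum, bar_smul]
  refine Finset.sum_congr rfl fun i _ => ?_
  simp [mul_assoc]

lemma Bf_zero_left (t : Fin (2*m) → ℤ) : Bf m 0 t = 0 := by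
  have : bar m (0 : Fin (2*m) → ℤ) = 0 := by
    funext i; simp only [bar, Pi.zero_apply]; split <;> ring
  simp [Bf, this]

lemma ne_zero_of_Bf_left {a t : Fin (2*m) → ℤ} (h : Bf m a t ≠ 0) : a ≠ 0 := by
  rintro rfl; exact h (Bf_zero_left t)

lemma ne_zero_of_Bf_right {a t : Fin (2*m) → ℤ} (h : Bf m t a ≠ 0) : a ≠ 0 := by
  rintro rfl; simp [Bf] at h

/-- Nondegeneracy. -/
lemma exists_Bf_ne {a : Fin (2*m) → ℤ} (ha : a ≠ 0) : ∃ t, Bf m t a ≠ 0 := by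
  have : ∃ i, a i ≠ 0 := by
    by_contra hc; push_neg at hc; exact ha (funext hc)
  obtain ⟨i₀, hi₀⟩ := this
  refine ⟨-(bar m (Pi.single i₀ (a i₀))), ?_⟩
  have hb : bar m (-(bar m (Pi.single i₀ (a i₀)))) = Pi.single i₀ (a i₀) := by
    rw [bar_neg, bar_bar, neg_neg]
  rw [Bf, hb]
  rw [Fintype.sum_eq_single i₀ (fun j hj => by simp [Pi.single_apply, hj])]
  simpa using mul_ne_zero hi₀ hi₀

/-- A vector pairing nontrivially with two given nonzero vectors. -/
lemma exists_Bf_ne_pair {x y : Fin (2*m) → ℤ} (hx : x ≠ 0) (hy : y ≠ 0) :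
    ∃ t, Bf m t x ≠ 0 ∧ Bf m t y ≠ 0 := by
  obtain ⟨u, hu⟩ := exists_Bf_ne hx
  obtain ⟨v, hv⟩ := exists_Bf_ne hy
  by_cases h1 : Bf m u y ≠ 0
  · exact ⟨u, hu, h1⟩
  by_cases h2 : Bf m v x ≠ 0
  · exact ⟨v, h2, hv⟩
  push_neg at h1 h2
  exact ⟨u + v, by rw [Bf_add_left, h2, add_zero]; exact hu,
         by rw [Bf_add_left, h1, zero_add]; exact hv⟩

/-- A vector pairing nontrivially with `x`, `y` and `x + y`. -/
lemma exists_Bf_ne_triple {x y : Fin (2*m) → ℤ} (hx : x ≠ 0) (hy : y ≠ 0)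
    (hxy : x + y ≠ 0) :
    ∃ t, Bf m t x ≠ 0 ∧ Bf m t y ≠ 0 ∧ Bf m t (x + y) ≠ 0 := by
  obtain ⟨t, htx, hts⟩ := exists_Bf_ne_pair hx hxy
  obtain ⟨u, hu⟩ := exists_Bf_ne hy
  have key : ∃ n : ℤ, Bf m t x + n * Bf m u x ≠ 0 ∧ Bf m t y + n * Bf m u y ≠ 0 ∧
      Bf m t (x+y) + n * Bf m u (x+y) ≠ 0 := by
    by_contra hc
    push_neg at hc
    have h0 := hc 0
    have h1 := hc 1
    have h2 := hc 2
    have h3 := hc 3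
    omega
  obtain ⟨n, hn1, hn2, hn3⟩ := key
  refine ⟨t + n • u, ?_, ?_, ?_⟩ <;>
    rw [Bf_add_left, Bf_smul_left] <;> assumption

variable {lam : (Fin (2*m) → ℤ) → (Fin (2*m) → ℤ) → ℂ}

lemma eq93' (h93 : Eq93 m lam) {l r s : Fin (2*m) → ℤ} (hl : l ≠ 0) (hr : r ≠ 0)
    (hs : s ≠ 0) :
    ((Bf m l s : ℤ) : ℂ) * lam r (s + l) + ((Bf m l r : ℤ) : ℂ) * lam s (r + l)
      - ((Bf m l (r + s) : ℤ) : ℂ) * lam r s = 0 :=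
  h93 l r s hl hr hs

/-- Master lemma: if `B(a,b) ≠ 0` then `λ(a,b) = λ(b,b)`. -/
lemma master (hsymm : ∀ r s, lam r s = lam s r) (h93 : Eq93 m lam)
    {a b : Fin (2*m) → ℤ} (ha : a ≠ 0) (hb : b ≠ 0) (hB : Bf m a b ≠ 0) :
    lam a b = lam b b := by
  have hBc : ((Bf m a b : ℤ) : ℂ) ≠ 0 := Int.cast_ne_zero.mpr hB
  -- step 1 : λ(b, b+a) = λ(b,b)
  have e1 := eq93' h93 (l := a) (r := b) (s := b) ha hb hb
  have hbb : Bf m a (b + b) = 2 * Bf m a b := by rw [Bf_add_right]; ring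
  rw [hbb] at e1
  push_cast at e1
  have step1 : lam b (b + a) = lam b b := by
    have h2 : (2 : ℂ) * (Bf m a b : ℂ) ≠ 0 := by
      exact mul_ne_zero two_ne_zero hBc
    apply mul_left_cancel₀ h2
    linear_combination e1
  -- step 2 : λ(a,b) = λ(b, a+b)
  have e2 := eq93' h93 (l := b) (r := a) (s := b) hb ha hb
  have h1 : Bf m b b = 0 := Bf_self b
  have h2 : Bf m b (a + b) = Bf m b a := by rw [Bf_add_right, h1, add_zero]
  have h3 : Bf m b a = - Bf m a b := by rw [Bf_antisymm]
  rw [h1, h2, h3] at e2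
  push_cast at e2
  have step2 : lam a b = lam b (a + b) := by
    apply mul_left_cancel₀ (neg_ne_zero.mpr hBc)
    linear_combination -e2
  rw [step2, add_comm, step1]

/-- Key lemma: if `a, b, a+b` are all nonzero then `λ(a,b) = λ(b,b)`. -/
lemma keyLem (hsymm : ∀ r s, lam r s = lam s r) (h93 : Eq93 m lam)
    {a b : Fin (2*m) → ℤ} (ha : a ≠ 0) (hb : b ≠ 0) (hab : a + b ≠ 0) :
    lam a b = lam b b := by
  by_cases hB : Bf m a b = 0
  · obtain ⟨t, hta, htb, htab⟩ := exists_Bf_ne_triple ha hb hab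
    have ht : t ≠ 0 := ne_zero_of_Bf_left hta
    -- λ(a,a) = λ(t,t) and λ(b,b) = λ(t,t)
    have haa : lam a a = lam t t := by
      have u1 : lam t a = lam a a := master hsymm h93 ht ha hta
      have u2 : lam a t = lam t t := master hsymm h93 ha ht
        (by rw [Bf_antisymm]; exact neg_ne_zero.mpr hta)
      rw [← u1, hsymm t a, u2]
    have hbb : lam b b = lam t t := by
      have u1 : lam t b = lam b b := master hsymm h93 ht hb htb
      have u2 : lam b t = lam t t := master hsymm h93 hb ht
        (by rw [Bf_antisymm]; exact neg_ne_zero.mpr htb)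
      rw [← u1, hsymm t b, u2]
    -- λ(a, b+t) = λ(b,b)
    have hba : Bf m b a = 0 := by rw [Bf_antisymm, hB, neg_zero]
    have hBbt_a : Bf m (b + t) a ≠ 0 := by
      rw [Bf_add_left, hba, zero_add]; exact hta
    have habt : lam a (b + t) = lam b b := by
      have := master hsymm h93 (ne_zero_of_Bf_left hBbt_a) ha hBbt_a
      rw [hsymm a (b + t), this, haa, hbb]
    have hBat_b : Bf m (a + t) b ≠ 0 := by
      rw [Bf_add_left, hB, zero_add]; exact htb
    have hbat : lam b (a + t) = lam b b := by
      have := master hsymm h93 (ne_zero_of_Bf_left hBat_b) hb hBat_b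
      rw [hsymm b (a + t), this]
    -- main equation
    have e := eq93' h93 (l := t) (r := a) (s := b) ht ha hb
    rw [habt, hbat] at e
    have hsum : Bf m t (a + b) = Bf m t a + Bf m t b := Bf_add_right t a b
    have hcast : ((Bf m t (a+b) : ℤ) : ℂ) = (Bf m t a : ℂ) + (Bf m t b : ℂ) := by
      rw [hsum]; push_cast; ring
    apply mul_left_cancel₀ (Int.cast_ne_zero.mpr htab : ((Bf m t (a+b) : ℤ) : ℂ) ≠ 0)
    linear_combination -e - lam b b * hcast
  · exact master hsymm h93 ha hb hB

end Stmt13Aux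

open Stmt13Aux in
/-- Lemma 9.8: if `r, s ∈ ℤ^{2m} \ {0}` are not rational multiples of each other, then
(1) `λ(r,r) = λ(s,s)`; (2) `λ(s+r,s) = λ(s,s)`; (3) `λ(r,s) = λ(s,s)`;
(4) `λ(s+r, j·r) = λ(s,s)` for all `j ∈ ℤ \ {0}`;
(5) `λ(s, j·s+r) = λ(s,s)` for all `j ∈ ℤ \ {0}`. -/
theorem stmt13 (m : ℕ) (hm : 1 ≤ m)
    (lam : (Fin (2*m) → ℤ) → (Fin (2*m) → ℤ) → ℂ)
    (hsymm : ∀ r s, lam r s = lam s r)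
    (h93 : Eq93 m lam)
    (r s : Fin (2*m) → ℤ) (hr : r ≠ 0) (hs : s ≠ 0)
    (hnq₁ : ¬ ∃ q : ℚ, ∀ i, (r i : ℚ) = q * (s i : ℚ))
    (hnq₂ : ¬ ∃ q : ℚ, ∀ i, (s i : ℚ) = q * (r i : ℚ)) :
    lam r r = lam s s ∧
    lam (s + r) s = lam s s ∧
    lam r s = lam s s ∧
    (∀ j : ℤ, j ≠ 0 → lam (s + r) (j • r) = lam s s) ∧
    (∀ j : ℤ, j ≠ 0 → lam s (j • s + r) = lam s s) := by
  -- integral linear independence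
  have hind : ∀ p q : ℤ, p • r + q • s = 0 → p = 0 ∧ q = 0 := by
    intro p q h
    have hpt : ∀ i, p * r i + q * s i = 0 := by
      intro i
      have := congrFun h i
      simpa using this
    have hp : p = 0 := by
      by_contra hp
      apply hnq₁
      refine ⟨(-q : ℚ) / (p : ℚ), fun i => ?_⟩
      have := hpt i
      have hpq : (p : ℚ) * (r i : ℚ) + (q : ℚ) * (s i : ℚ) = 0 := by exact_mod_cast this
      have hpQ : (p : ℚ) ≠ 0 := Int.cast_ne_zero.mpr hp
      field_simp
      linarith
    subst hp
    have hq : q = 0 := by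
      by_contra hq
      apply hnq₂
      refine ⟨0, fun i => ?_⟩
      have := hpt i
      have : q * s i = 0 := by linarith [hpt i]
      have hsi : s i = 0 := by
        rcases mul_eq_zero.mp this with h' | h'
        · exact absurd h' hq
        · exact h'
      simp [hsi]
    exact ⟨rfl, hq⟩
  have nz : ∀ p q : ℤ, (p ≠ 0 ∨ q ≠ 0) → p • r + q • s ≠ 0 := by
    intro p q hpq h
    obtain ⟨h1, h2⟩ := hind p q h
    tauto
  -- specific nonzero combinations
  have hkey : ∀ a b : Fin (2*m) → ℤ, a ≠ 0 → b ≠ 0 → a + b ≠ 0 → lam a b = lam b b :=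
    fun a b ha hb hab => keyLem hsymm h93 ha hb hab
  have hrs : r + s ≠ 0 := by
    have := nz 1 1 (Or.inl one_ne_zero); intro h; apply this; rw [← h]; module
  have hsr : s + r ≠ 0 := by
    have := nz 1 1 (Or.inl one_ne_zero); intro h; apply this; rw [← h]; module
  have g3 : lam r s = lam s s := hkey r s hr hs hrs
  have g1 : lam r r = lam s s := by
    have h1 : lam s r = lam r r := hkey s r hs hr hsr
    rw [← h1, ← hsymm r s, g3]
  have g2 : lam (s + r) s = lam s s := by
    refine hkey (s + r) s hsr hs ?_
    have := nz 1 2 (Or.inl one_ne_zero); intro h; apply this; rw [← h]; module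
  refine ⟨g1, g2, g3, ?_, ?_⟩
  · intro j hj
    have hjr : j • r ≠ 0 := by
      have := nz j 0 (Or.inl hj); intro h; apply this; rw [← h]; module
    have hsum1 : s + r + j • r ≠ 0 := by
      have := nz (1 + j) 1 (Or.inr one_ne_zero); intro h; apply this; rw [← h]; module
    have h1 : lam (s + r) (j • r) = lam (j • r) (j • r) := hkey (s + r) (j • r) hsr hjr hsum1
    have h2 : lam s (j • r) = lam (j • r) (j • r) := by
      refine hkey s (j • r) hs hjr ?_
      have := nz j 1 (Or.inr one_ne_zero); intro h; apply this; rw [← h]; module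
    have h3 : lam (j • r) s = lam s s := by
      refine hkey (j • r) s hjr hs ?_
      have := nz j 1 (Or.inr one_ne_zero); intro h; apply this; rw [← h]; module
    rw [h1, ← h2, hsymm s (j • r), h3]
  · intro j hj
    have hjs : j • s + r ≠ 0 := by
      have := nz 1 j (Or.inl one_ne_zero); intro h; apply this; rw [← h]; module
    have hsum : j • s + r + s ≠ 0 := by
      have := nz 1 (j + 1) (Or.inl one_ne_zero); intro h; apply this; rw [← h]; module
    have h1 : lam (j • s + r) s = lam s s := hkey (j • s + r) s hjs hs hsum
    rw [hsymm s (j • s + r), h1]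
end

section
/- For every nonzero s ∈ ℤ^N: (1) λ(j·s, j·s) = λ(s, s) for every j ∈ ℤ \ {0}; (2) λ(j·s, p·s) = λ(s, s) for all j, p ∈ ℤ \ {0} with j + p ≠ 0. -/
namespace LinearMap.BilinForm

section
variable {R M : Type*} [CommSemiring R] [AddCommMonoid M] [Module R M]
  {B : LinearMap.BilinForm R M} {x y : M}

lemma left_ne_zero_of_apply_ne_zero (h : B x y ≠ 0) : x ≠ 0 := by
  rintro rfl; simp at h

lemma right_ne_zero_of_apply_ne_zero (h : B x y ≠ 0) : y ≠ 0 := by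
  rintro rfl; simp at h

end

lemma zsmul_ne_zero_of_apply_ne_zero {M : Type*} [AddCommGroup M] {B : LinearMap.BilinForm ℤ M}
    {x y : M} (h : B x y ≠ 0) {q : ℤ} (hq : q ≠ 0) : q • x ≠ 0 :=
  left_ne_zero_of_apply_ne_zero (B := B) (y := y) (by simpa [hq] using h)

end LinearMap.BilinForm

open LinearMap.BilinForm

section

variable {V K : Type*} [AddCommGroup V] [Field K] [CharZero K]

def IsEq93Solution (ω : LinearMap.BilinForm ℤ V) (lam : V → V → K) : Prop :=
  ∀ l r s : V, l ≠ 0 → r ≠ 0 → s ≠ 0 →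
    (ω l s : K) * lam r (s + l) + (ω l r : K) * lam s (r + l) - (ω l (r + s) : K) * lam r s = 0

namespace IsEq93Solution

variable {ω : LinearMap.BilinForm ℤ V} {lam : V → V → K}

lemma apply_smul_add_smul (h : IsEq93Solution ω lam) (hω : LinearMap.IsAlt ω) {u t : V}
    (hut : ω u t ≠ 0) {p q : ℤ} (hp : p ≠ 0) (hq : q ≠ 0) :
    lam (p • u) (t + q • u) = lam t (p • u) := by
  have E := h (q • u) t (p • u) (zsmul_ne_zero_of_apply_ne_zero hut hq)
    (right_ne_zero_of_apply_ne_zero hut) (zsmul_ne_zero_of_apply_ne_zero hut hp)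
  simp only [map_smul, LinearMap.smul_apply, map_add, hω.self_eq_zero, smul_eq_mul] at E
  have : ((q * ω u t : ℤ) : K) ≠ 0 := by exact_mod_cast mul_ne_zero hq hut
  apply mul_left_cancel₀ this
  push_cast at E ⊢
  linear_combination E

section

variable {l s : V}

lemma apply_smul_sub (h : IsEq93Solution ω lam) (hω : LinearMap.IsAlt ω)
    (hsymm : ∀ x y, lam x y = lam y x) (hls : ω l s ≠ 0) {k : ℤ} (hk : k ≠ 0) :
    lam l (k • s - l) = lam l (k • s) := by
  have hlks : ω l (k • s) ≠ 0 := by simpa [hk] using hls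
  have := h.apply_smul_add_smul hω hlks one_ne_zero (neg_ne_zero.mpr one_ne_zero)
  rw [one_smul, neg_one_smul, ← sub_eq_add_neg] at this
  rw [this, hsymm]

lemma apply_smul_sub_add_smul (h : IsEq93Solution ω lam) (hω : LinearMap.IsAlt ω)
    (hsymm : ∀ x y, lam x y = lam y x) (hls : ω l s ≠ 0) {a b : ℤ} (hb : b ≠ 0)
    (hab : a + b ≠ 0) : lam (a • s - l) (l + b • s) = lam l ((a + b) • s) := by
  have hsl : ω s l ≠ 0 := hω.eq_iff.not.mp hls
  have E := h (b • s) (a • s - l) l (zsmul_ne_zero_of_apply_ne_zero hsl hb)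
    (right_ne_zero_of_apply_ne_zero (by simpa [hω.self_eq_zero] using hsl : ω s (a • s - l) ≠ 0))
    (left_ne_zero_of_apply_ne_zero hls)
  rw [sub_add_cancel, show a • s - l + b • s = (a + b) • s - l by module,
    h.apply_smul_sub hω hsymm hls hab] at E
  simp only [map_smul, LinearMap.smul_apply, map_sub, hω.self_eq_zero, smul_eq_mul] at E
  have : ((b * ω s l : ℤ) : K) ≠ 0 := by exact_mod_cast mul_ne_zero hb hsl
  apply mul_left_cancel₀ this
  push_cast at E ⊢
  linear_combination E

lemma add_mul_apply_smul_smul (h : IsEq93Solution ω lam) (hω : LinearMap.IsAlt ω)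
    (hls : ω l s ≠ 0) {j p : ℤ} (hj : j ≠ 0) (hp : p ≠ 0) :
    ((j + p : ℤ) : K) * lam (j • s) (p • s) = p * lam l (j • s) + j * lam l (p • s) := by
  have hsl : ω s l ≠ 0 := hω.eq_iff.not.mp hls
  have E := h l (j • s) (p • s) (left_ne_zero_of_apply_ne_zero hls)
    (zsmul_ne_zero_of_apply_ne_zero hsl hj)
    (zsmul_ne_zero_of_apply_ne_zero hsl hp)
  rw [add_comm (p • s), add_comm (j • s), h.apply_smul_add_smul hω hsl hj hp,
    h.apply_smul_add_smul hω hsl hp hj, ← add_smul] at E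
  simp only [map_smul, smul_eq_mul] at E
  apply mul_left_cancel₀ (Int.cast_ne_zero.mpr hls : ((ω l s : ℤ) : K) ≠ 0)
  push_cast at E ⊢
  linear_combination -E

lemma add_mul_apply_smul (h : IsEq93Solution ω lam) (hω : LinearMap.IsAlt ω)
    (hsymm : ∀ x y, lam x y = lam y x) (hls : ω l s ≠ 0) {a b : ℤ} (ha : a ≠ 0) (hb : b ≠ 0)
    (hab : a + b ≠ 0) :
    ((a + b : ℤ) : K) * lam l (a • s)
      = b * lam (a • s) (b • s) + a * lam l ((a + b) • s) := by
  have hsl : ω s l ≠ 0 := hω.eq_iff.not.mp hls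
  have E := h (-l) (a • s) (b • s + l) (neg_ne_zero.mpr (left_ne_zero_of_apply_ne_zero hls))
    (zsmul_ne_zero_of_apply_ne_zero hsl ha)
    (right_ne_zero_of_apply_ne_zero (by simpa [hω.self_eq_zero] using hsl : ω s (b • s + l) ≠ 0))
  rw [add_neg_cancel_right, ← sub_eq_add_neg, hsymm (b • s + l), add_comm (b • s),
    h.apply_smul_sub_add_smul hω hsymm hls hb hab, h.apply_smul_add_smul hω hsl ha hb] at E
  simp only [map_neg, LinearMap.neg_apply, map_add, map_smul, smul_eq_mul,
    hω.self_eq_zero] at E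
  apply mul_left_cancel₀ (Int.cast_ne_zero.mpr hls : ((ω l s : ℤ) : K) ≠ 0)
  push_cast at E ⊢
  linear_combination E

lemma apply_smul_eq_of_add_ne_zero (h : IsEq93Solution ω lam) (hω : LinearMap.IsAlt ω)
    (hsymm : ∀ x y, lam x y = lam y x) (hls : ω l s ≠ 0) {a b : ℤ} (ha : a ≠ 0) (hb : b ≠ 0)
    (hab : a + b ≠ 0) : lam l (a • s) = lam l (b • s) := by
  -- Eliminating `lam (a • s) (b • s)` leaves `2ab(a+b) (C a - C b) = 0`, where
  -- `C k = lam l (k • s)`.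
  have Sab := h.add_mul_apply_smul hω hsymm hls ha hb hab
  have Sba := h.add_mul_apply_smul hω hsymm hls hb ha (by rwa [add_comm])
  have P := h.add_mul_apply_smul_smul hω hls ha hb
  rw [hsymm (b • s), add_comm b] at Sba
  have : ((2 * a * b * (a + b) : ℤ) : K) ≠ 0 := by
    exact_mod_cast mul_ne_zero (mul_ne_zero (mul_ne_zero two_ne_zero ha) hb) hab
  apply mul_left_cancel₀ this
  push_cast at Sab Sba P ⊢
  linear_combination (b * (a + b)) * Sab - a * (a + b) * Sba + (b ^ 2 - a ^ 2) * P

lemma apply_smul_eq (h : IsEq93Solution ω lam) (hω : LinearMap.IsAlt ω)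
    (hsymm : ∀ x y, lam x y = lam y x) (hls : ω l s ≠ 0) {a b : ℤ} (ha : a ≠ 0) (hb : b ≠ 0) :
    lam l (a • s) = lam l (b • s) := by
  by_cases hab : a + b = 0
  · rw [h.apply_smul_eq_of_add_ne_zero hω hsymm hls ha (mul_ne_zero two_ne_zero ha) (by omega),
      h.apply_smul_eq_of_add_ne_zero hω hsymm hls (mul_ne_zero two_ne_zero ha) hb (by omega)]
  · exact h.apply_smul_eq_of_add_ne_zero hω hsymm hls ha hb hab

lemma apply_smul_smul_eq (h : IsEq93Solution ω lam) (hω : LinearMap.IsAlt ω)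
    (hsymm : ∀ x y, lam x y = lam y x) (hls : ω l s ≠ 0) {j p : ℤ} (hj : j ≠ 0) (hp : p ≠ 0)
    (hjp : j + p ≠ 0) : lam (j • s) (p • s) = lam l s := by
  have P := h.add_mul_apply_smul_smul hω hls hj hp
  rw [h.apply_smul_eq hω hsymm hls hj one_ne_zero, h.apply_smul_eq hω hsymm hls hp one_ne_zero,
    one_smul] at P
  apply mul_left_cancel₀ (Int.cast_ne_zero.mpr hjp : ((j + p : ℤ) : K) ≠ 0)
  push_cast at P ⊢
  linear_combination P

end

theorem apply_smul_smul_eq_apply_self (h : IsEq93Solution ω lam) (hω : LinearMap.IsAlt ω)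
    (hsymm : ∀ x y, lam x y = lam y x) {l s : V} (hls : ω l s ≠ 0) {j p : ℤ} (hj : j ≠ 0)
    (hp : p ≠ 0) (hjp : j + p ≠ 0) : lam (j • s) (p • s) = lam s s := by
  rw [h.apply_smul_smul_eq hω hsymm hls hj hp hjp,
    ← h.apply_smul_smul_eq hω hsymm hls one_ne_zero one_ne_zero two_ne_zero, one_smul]

end IsEq93Solution

end

section

variable {m : ℕ}

lemma bar_add (u v : Fin (2*m) → ℤ) : bar m (u + v) = bar m u + bar m v := by
  funext i; simp only [bar, Pi.add_apply]; split_ifs <;> ring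

lemma bar_smul (c : ℤ) (u : Fin (2*m) → ℤ) : bar m (c • u) = c • bar m u := by
  funext i; simp only [bar, Pi.smul_apply, smul_eq_mul]; split_ifs <;> ring

lemma bar_bar (u : Fin (2*m) → ℤ) : bar m (bar m u) = -u := by
  funext i
  simp only [bar, Pi.neg_apply]
  split_ifs <;> first | omega | simp [Nat.sub_add_cancel (not_lt.mp ‹_›)]

lemma bar_dotProduct_self (u : Fin (2*m) → ℤ) : bar m u ⬝ᵥ u = 0 := by
  rw [dotProduct, ← Fin.sum_congr' _ (two_mul m).symm, Fin.sum_univ_add,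
    ← Finset.sum_add_distrib]
  refine Finset.sum_eq_zero fun a _ => ?_
  simp only [bar, Fin.cast, Fin.castAdd, Fin.castLE, Fin.is_lt, ↓reduceDIte, Fin.natAdd_eq_addNat,
    Fin.addNat, add_lt_iff_neg_right, not_lt_zero, add_tsub_cancel_right, neg_mul]
  ring

def symplecticForm (m : ℕ) : LinearMap.BilinForm ℤ (Fin (2*m) → ℤ) :=
  LinearMap.mk₂ ℤ (fun u v => bar m u ⬝ᵥ v)
    (fun u₁ u₂ v => by rw [bar_add, add_dotProduct])
    (fun c u v => by rw [bar_smul, smul_dotProduct])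
    (fun u v₁ v₂ => dotProduct_add _ _ _)
    (fun c u v => dotProduct_smul _ _ _)

lemma symplecticForm_apply (u v : Fin (2*m) → ℤ) : symplecticForm m u v = bar m u ⬝ᵥ v := rfl

lemma symplecticForm_isAlt : LinearMap.IsAlt (symplecticForm m) := bar_dotProduct_self

lemma symplecticForm_bar_self_ne_zero {s : Fin (2*m) → ℤ} (hs : s ≠ 0) :
    symplecticForm m (bar m s) s ≠ 0 := by
  simpa [symplecticForm_apply, bar_bar] using hs

end

lemma Eq93.isEq93Solution {m : ℕ} {lam : (Fin (2*m) → ℤ) → (Fin (2*m) → ℤ) → ℂ}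
    (h : Eq93 m lam) :
    IsEq93Solution (symplecticForm m) lam := h

theorem stmt14_general (m : ℕ)
    (lam : (Fin (2*m) → ℤ) → (Fin (2*m) → ℤ) → ℂ)
    (hsymm : ∀ r s, lam r s = lam s r)
    (h93 : Eq93 m lam)
    (s : Fin (2*m) → ℤ) (hs : s ≠ 0) :
    (∀ j : ℤ, j ≠ 0 → lam (j • s) (j • s) = lam s s) ∧
    (∀ j p : ℤ, j ≠ 0 → p ≠ 0 → j + p ≠ 0 → lam (j • s) (p • s) = lam s s) := by
  have key : ∀ j p : ℤ, j ≠ 0 → p ≠ 0 → j + p ≠ 0 → lam (j • s) (p • s) = lam s s :=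
    fun _ _ => h93.isEq93Solution.apply_smul_smul_eq_apply_self symplecticForm_isAlt hsymm
      (symplecticForm_bar_self_ne_zero hs)
  exact ⟨fun j hj => key j j hj hj (by omega), key⟩

/-- For every nonzero `s ∈ ℤ^{2m}`:
(1) `λ(j·s, j·s) = λ(s,s)` for all `j ∈ ℤ \ {0}`;
(2) `λ(j·s, p·s) = λ(s,s)` for all `j, p ∈ ℤ \ {0}` with `j + p ≠ 0`. -/
theorem stmt14 (m : ℕ) (hm : 1 ≤ m)
    (lam : (Fin (2*m) → ℤ) → (Fin (2*m) → ℤ) → ℂ)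
    (hsymm : ∀ r s, lam r s = lam s r)
    (h93 : Eq93 m lam)
    (s : Fin (2*m) → ℤ) (hs : s ≠ 0) :
    (∀ j : ℤ, j ≠ 0 → lam (j • s) (j • s) = lam s s) ∧
    (∀ j p : ℤ, j ≠ 0 → p ≠ 0 → j + p ≠ 0 → lam (j • s) (p • s) = lam s s) :=
  stmt14_general m lam hsymm h93 s hs
end

section
/- There exists a constant λ₀ ∈ ℂ such that λ(r, s) = λ₀ for all r, s ∈ ℤ^N \ {0} with r + s ≠ 0. -/
namespace Stmt15

variable {m : ℕ}

def sigFun (m : ℕ) (i : Fin (2*m)) : Fin (2*m) :=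
  if h : (i : ℕ) < m then ⟨(i:ℕ)+m, by omega⟩
  else ⟨(i:ℕ)-m, by have := i.isLt; omega⟩

lemma sig_invol (m : ℕ) : Function.Involutive (sigFun m) := by
  intro i
  rcases i with ⟨i, hi⟩
  unfold sigFun
  by_cases h : i < m
  · rw [dif_pos h, dif_neg (show ¬ ((⟨i+m, by omega⟩ : Fin (2*m)) : ℕ) < m by simp)]
    apply Fin.ext
    simp
  · rw [dif_neg h, dif_pos (show ((⟨i-m, by omega⟩ : Fin (2*m)) : ℕ) < m by simp; omega)]
    apply Fin.ext
    simp
    omega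

def sig (m : ℕ) : Equiv.Perm (Fin (2*m)) := Function.Involutive.toPerm _ (sig_invol m)

lemma bar_apply_sig (x : Fin (2*m) → ℤ) (i : Fin (2*m)) :
    bar m x i = (if (i:ℕ) < m then 1 else -1) * x (sigFun m i) := by
  unfold bar sigFun
  by_cases h : (i:ℕ) < m
  · rw [dif_pos h, dif_pos h, if_pos h, one_mul]
  · rw [dif_neg h, dif_neg h, if_neg h]; ring

lemma iso (x y : Fin (2*m) → ℤ) :
    ∑ i, bar m x i * bar m y i = ∑ i, x i * y i := by
  have h : ∀ i, bar m x i * bar m y i = x (sig m i) * y (sig m i) := by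
    intro i
    rw [bar_apply_sig, bar_apply_sig]
    show _ = x (sigFun m i) * y (sigFun m i)
    by_cases h : (i:ℕ) < m
    · rw [if_pos h]; ring
    · rw [if_neg h]; ring
  rw [Finset.sum_congr rfl (fun i _ => h i)]
  exact Equiv.sum_comp (sig m) (fun j => x j * y j)

lemma bar_bar (x : Fin (2*m) → ℤ) : bar m (bar m x) = -x := by
  funext i
  rcases i with ⟨i, hi⟩
  by_cases h : i < m
  · have e1 : bar m (bar m x) ⟨i, hi⟩ = bar m x ⟨i+m, by omega⟩ := dif_pos h
    have e2 : bar m x ⟨i+m, by omega⟩ = - x ⟨i+m-m, by omega⟩ := dif_neg (by simp)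
    have e3 : (⟨i+m-m, by omega⟩ : Fin (2*m)) = ⟨i, hi⟩ := by apply Fin.ext; simp
    rw [e1, e2, e3]; rfl
  · have e1 : bar m (bar m x) ⟨i, hi⟩ = - bar m x ⟨i-m, by omega⟩ := dif_neg h
    have e2 : bar m x ⟨i-m, by omega⟩ = x ⟨i-m+m, by omega⟩ := dif_pos (by simp; omega)
    have e3 : (⟨i-m+m, by omega⟩ : Fin (2*m)) = ⟨i, hi⟩ := by apply Fin.ext; simp; omega
    rw [e1, e2, e3]; rfl

lemma bar_zero : bar m (0 : Fin (2*m) → ℤ) = 0 := by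
  funext i
  by_cases h : (i:ℕ) < m <;> simp [bar, h]

lemma sum_barbar_mul (u v : Fin (2*m) → ℤ) :
    ∑ i, bar m (bar m u) i * v i = -∑ i, u i * v i := by
  rw [bar_bar]
  simp [Pi.neg_apply, neg_mul]

lemma anti (x y : Fin (2*m) → ℤ) :
    ∑ i, bar m x i * y i = - ∑ i, bar m y i * x i := by
  have h1 := iso x (bar m y)
  rw [bar_bar] at h1
  simp only [Pi.neg_apply, mul_neg] at h1
  rw [Finset.sum_neg_distrib] at h1
  have h2 : ∑ i, x i * bar m y i = ∑ i, bar m y i * x i :=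
    Finset.sum_congr rfl (fun i _ => mul_comm _ _)
  linarith [h1, h2]

lemma om_self (x : Fin (2*m) → ℤ) : ∑ i, bar m x i * x i = 0 := by
  have := anti x x
  omega

lemma bar_sub (x y : Fin (2*m) → ℤ) : bar m (x - y) = bar m x - bar m y := by
  funext i
  by_cases h : (i:ℕ) < m <;> simp [bar, h, Pi.sub_apply] <;> ring

lemma aux_ne (A B T : ℤ) (hT : |A| < T) (hB : B ≠ 0) : A + T * B ≠ 0 := by
  intro h0
  have h1 : 1 ≤ |B| := Int.one_le_abs hB
  have h2 : |A| = |T * B| := by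
    have : A = -(T * B) := by linarith
    rw [this, abs_neg]
  rw [abs_mul] at h2
  have hT0 : 0 < T := lt_of_le_of_lt (abs_nonneg A) hT
  rw [abs_of_pos hT0] at h2
  nlinarith

lemma inner_self_ne (x : Fin (2*m) → ℤ) (hx : x ≠ 0) : ∑ i, x i * x i ≠ 0 := by
  have hex : ∃ j, x j ≠ 0 := by
    by_contra h
    push_neg at h
    exact hx (funext h)
  obtain ⟨j, hj⟩ := hex
  have hpos : 0 < ∑ i, x i * x i := by
    apply Finset.sum_pos' (fun i _ => mul_self_nonneg (x i))
    exact ⟨j, Finset.mem_univ j, mul_self_pos.mpr hj⟩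
  omega

/-- KEY: if ω(y,x) ≠ 0 then λ(x,y) = λ(x,x). -/
lemma key (lam : (Fin (2*m) → ℤ) → (Fin (2*m) → ℤ) → ℂ) (h93 : Eq93 m lam)
    (x y : Fin (2*m) → ℤ) (hx : x ≠ 0) (h : ∑ i, bar m y i * x i ≠ 0) :
    lam x y = lam x x := by
  set l : Fin (2*m) → ℤ := y - x with hl_def
  have hl : ∑ i, bar m l i * x i = ∑ i, bar m y i * x i := by
    rw [hl_def, bar_sub]
    simp only [Pi.sub_apply, sub_mul]
    rw [Finset.sum_sub_distrib, om_self]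
    ring
  have hlne : l ≠ 0 := by
    intro h0
    rw [h0, bar_zero] at hl
    simp only [Pi.zero_apply, zero_mul, Finset.sum_const_zero] at hl
    exact h hl.symm
  have hxy : x + l = y := by rw [hl_def]; abel
  have hsum2 : (∑ i, bar m l i * (x + x) i) = 2 * ∑ i, bar m l i * x i := by
    simp only [Pi.add_apply, mul_add]
    rw [Finset.sum_add_distrib]
    ring
  have H := h93 l x x hlne hx hx
  rw [hxy, hsum2, hl] at H
  set a : ℤ := ∑ i, bar m y i * x i with ha
  have h2a : ((2*a : ℤ) : ℂ) * (lam x y - lam x x) = 0 := by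
    push_cast at H ⊢
    linear_combination H
  have h2ne : ((2*a : ℤ) : ℂ) ≠ 0 := Int.cast_ne_zero.mpr (by omega)
  exact sub_eq_zero.mp ((mul_eq_zero.mp h2a).resolve_left h2ne)

/-- All diagonal values agree. -/
lemma diag (lam : (Fin (2*m) → ℤ) → (Fin (2*m) → ℤ) → ℂ)
    (hsymm : ∀ r s, lam r s = lam s r) (h93 : Eq93 m lam)
    (x e : Fin (2*m) → ℤ) (hx : x ≠ 0) (hee : ∑ i, e i * e i ≠ 0) :
    lam x x = lam e e := by
  have he : e ≠ 0 := by
    intro h0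
    apply hee
    rw [h0]
    simp
  set A1 : ℤ := ∑ i, x i * x i with hA1
  set A2 : ℤ := ∑ i, x i * e i with hA2
  set B2 : ℤ := ∑ i, e i * e i with hB2
  have hB1 : ∑ i, e i * x i = A2 := Finset.sum_congr rfl (fun i _ => mul_comm _ _)
  set k : ℤ := |A1| + |A2| + 1 with hk
  set u : Fin (2*m) → ℤ := fun i => x i + k * e i with hu
  have hux : ∑ i, u i * x i = A1 + k * A2 := by
    have h1 : ∀ i, u i * x i = x i * x i + k * (e i * x i) := by
      intro i; rw [hu]; ring
    rw [Finset.sum_congr rfl (fun i _ => h1 i), Finset.sum_add_distrib, ← Finset.mul_sum, hB1]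
  have hue : ∑ i, u i * e i = A2 + k * B2 := by
    have h1 : ∀ i, u i * e i = x i * e i + k * (e i * e i) := by
      intro i; rw [hu]; ring
    rw [Finset.sum_congr rfl (fun i _ => h1 i), Finset.sum_add_distrib, ← Finset.mul_sum]
  have c1 : ∑ i, u i * x i ≠ 0 := by
    rw [hux]
    by_cases hq : A2 = 0
    · rw [hq]
      simpa using inner_self_ne x hx
    · exact aux_ne A1 A2 k (by have := abs_nonneg A2; omega) hq
  have c2 : ∑ i, u i * e i ≠ 0 := by
    rw [hue]
    exact aux_ne A2 B2 k (by have := abs_nonneg A1; omega) hee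
  set t : Fin (2*m) → ℤ := bar m u with htdef
  have htx : ∑ i, bar m t i * x i ≠ 0 := by
    rw [htdef, sum_barbar_mul]
    exact neg_ne_zero.mpr c1
  have hxt : ∑ i, bar m x i * t i ≠ 0 := by
    rw [anti x t]
    exact neg_ne_zero.mpr htx
  have hte : ∑ i, bar m t i * e i ≠ 0 := by
    rw [htdef, sum_barbar_mul]
    exact neg_ne_zero.mpr c2
  have het : ∑ i, bar m e i * t i ≠ 0 := by
    rw [anti e t]
    exact neg_ne_zero.mpr hte
  have ht : t ≠ 0 := by
    intro h0
    apply htx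
    rw [h0, bar_zero]
    simp
  calc lam x x = lam x t := (key lam h93 x t hx htx).symm
    _ = lam t x := hsymm x t
    _ = lam t t := key lam h93 t x ht hxt
    _ = lam t e := (key lam h93 t e ht het).symm
    _ = lam e t := hsymm t e
    _ = lam e e := key lam h93 e t he hte

/-- If ω(x,y) ≠ 0 then λ(x,y) equals the common diagonal value. -/
lemma nonz (lam : (Fin (2*m) → ℤ) → (Fin (2*m) → ℤ) → ℂ)
    (hsymm : ∀ r s, lam r s = lam s r) (h93 : Eq93 m lam)
    (x y e : Fin (2*m) → ℤ) (hee : ∑ i, e i * e i ≠ 0)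
    (h : ∑ i, bar m x i * y i ≠ 0) : lam x y = lam e e := by
  have hy : y ≠ 0 := by
    intro h0
    apply h
    rw [h0]
    simp
  calc lam x y = lam y x := hsymm x y
    _ = lam y y := key lam h93 y x hy h
    _ = lam e e := diag lam hsymm h93 y e hy hee

end Stmt15

/-- There is a constant `λ₀ ∈ ℂ` with `λ(r,s) = λ₀` for all nonzero `r, s ∈ ℤ^{2m}`
with `r + s ≠ 0`. -/
theorem stmt15 (m : ℕ) (hm : 1 ≤ m)
    (lam : (Fin (2*m) → ℤ) → (Fin (2*m) → ℤ) → ℂ)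
    (hsymm : ∀ r s, lam r s = lam s r)
    (h93 : Eq93 m lam) :
    ∃ lam₀ : ℂ, ∀ r s : Fin (2*m) → ℤ, r ≠ 0 → s ≠ 0 → r + s ≠ 0 →
      lam r s = lam₀ := by
  classical
  open Stmt15 in
  set e : Fin (2*m) → ℤ := fun j => if j = (⟨0, by omega⟩ : Fin (2*m)) then 1 else 0 with he_def
  have hee : ∑ i, e i * e i ≠ 0 := by
    have h1 : ∀ j, e j * e j = if j = (⟨0, by omega⟩ : Fin (2*m)) then (1:ℤ) else 0 := by
      intro j
      rw [he_def]
      by_cases h : j = (⟨0, by omega⟩ : Fin (2*m)) <;> simp [h]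
    rw [Finset.sum_congr rfl (fun j _ => h1 j), Finset.sum_ite_eq' Finset.univ]
    simp
  refine ⟨lam e e, fun r s hr hs hrs => ?_⟩
  by_cases h0 : (∑ i, bar m r i * s i) = 0
  · -- level-zero case
    set p : ℤ := ∑ i, r i * r i with hp
    set q : ℤ := ∑ i, r i * s i with hq
    set w : ℤ := ∑ i, s i * s i with hw
    have hqsym : ∑ i, s i * r i = q := Finset.sum_congr rfl (fun i _ => mul_comm _ _)
    set T : ℤ := |p| + |q| + |p+q| + 1 with hT
    set u : Fin (2*m) → ℤ := fun i => r i + T * s i with hu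
    have hur : ∑ i, u i * r i = p + T * q := by
      have h1 : ∀ i, u i * r i = r i * r i + T * (s i * r i) := by
        intro i; rw [hu]; ring
      rw [Finset.sum_congr rfl (fun i _ => h1 i), Finset.sum_add_distrib, ← Finset.mul_sum, hqsym]
    have hus : ∑ i, u i * s i = q + T * w := by
      have h1 : ∀ i, u i * s i = r i * s i + T * (s i * s i) := by
        intro i; rw [hu]; ring
      rw [Finset.sum_congr rfl (fun i _ => h1 i), Finset.sum_add_distrib, ← Finset.mul_sum]
    have hrs2 : p + 2*q + w ≠ 0 := by
      have hx : ∑ i, (r+s) i * (r+s) i = p + 2*q + w := by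
        have h1 : ∀ i, (r+s) i * (r+s) i =
            r i * r i + (r i * s i + (s i * r i + s i * s i)) := by
          intro i; simp only [Pi.add_apply]; ring
        rw [Finset.sum_congr rfl (fun i _ => h1 i), Finset.sum_add_distrib,
          Finset.sum_add_distrib, Finset.sum_add_distrib, hqsym]
        ring
      rw [← hx]
      exact inner_self_ne (r+s) hrs
    have c1 : p + T * q ≠ 0 := by
      by_cases hq0 : q = 0
      · rw [hq0]
        simpa using inner_self_ne r hr
      · exact aux_ne p q T (by have := abs_nonneg q; have := abs_nonneg (p+q); omega) hq0
    have c2 : q + T * w ≠ 0 :=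
      aux_ne q w T (by have := abs_nonneg p; have := abs_nonneg (p+q); omega)
        (inner_self_ne s hs)
    have c3 : (p+q) + T * (q+w) ≠ 0 := by
      by_cases hqw : q + w = 0
      · rw [hqw]
        omega
      · exact aux_ne (p+q) (q+w) T (by have := abs_nonneg p; have := abs_nonneg q; omega) hqw
    set l : Fin (2*m) → ℤ := bar m u with hldef
    have hl_r : ∑ i, bar m l i * r i = -(p + T * q) := by
      rw [hldef, sum_barbar_mul, hur]
    have hl_s : ∑ i, bar m l i * s i = -(q + T * w) := by
      rw [hldef, sum_barbar_mul, hus]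
    have hl_rs : ∑ i, bar m l i * (r + s) i = -((p+q) + T * (q+w)) := by
      have h1 : ∀ i, bar m l i * (r+s) i = bar m l i * r i + bar m l i * s i := by
        intro i; simp only [Pi.add_apply]; ring
      rw [Finset.sum_congr rfl (fun i _ => h1 i), Finset.sum_add_distrib, hl_r, hl_s]
      ring
    have hlne : l ≠ 0 := by
      intro hz
      apply c1
      have : ∑ i, bar m l i * r i = 0 := by
        rw [hz, bar_zero]
        simp
      omega
    have H := h93 l r s hlne hr hs
    have hv1 : lam r (s + l) = lam e e := by
      apply nonz lam hsymm h93 r (s+l) e hee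
      have hcomp : ∑ i, bar m r i * (s+l) i = p + T * q := by
        have h1 : ∀ i, bar m r i * (s+l) i = bar m r i * s i + bar m r i * l i := by
          intro i; simp only [Pi.add_apply]; ring
        rw [Finset.sum_congr rfl (fun i _ => h1 i), Finset.sum_add_distrib, h0, anti r l, hl_r]
        ring
      rw [hcomp]
      exact c1
    have hv2 : lam s (r + l) = lam e e := by
      apply nonz lam hsymm h93 s (r+l) e hee
      have hsr : ∑ i, bar m s i * r i = 0 := by
        rw [anti s r, h0]
        ring
      have hcomp : ∑ i, bar m s i * (r+l) i = q + T * w := by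
        have h1 : ∀ i, bar m s i * (r+l) i = bar m s i * r i + bar m s i * l i := by
          intro i; simp only [Pi.add_apply]; ring
        rw [Finset.sum_congr rfl (fun i _ => h1 i), Finset.sum_add_distrib, hsr, anti s l, hl_s]
        ring
      rw [hcomp]
      exact c2
    rw [hl_r, hl_s, hl_rs, hv1, hv2] at H
    have hC : (((p+q) + T * (q+w) : ℤ) : ℂ) ≠ 0 := Int.cast_ne_zero.mpr c3
    apply mul_left_cancel₀ hC
    push_cast at H ⊢
    linear_combination H
  · exact nonz lam hsymm h93 r s e hee h0
end
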